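/- arXiv:2303.16649 — 2 statements merged into one kernel-verified Lean document; each statement's English description precedes it below -/
import Mathlib

section
/- If a σ-complete ideal I on κ containing singletons is not maximal on any I-positive set and is nowhere ω₁-saturated in the sense that below every I-positive set there is an infinite I-partition, then there exists a decreasing sequence of I-partitions W_0 ≥ W_1 ≥ ... of some S ∈ I⁺ and sets A_k ∈ W_k with A_0 ⊇ A_1 ⊇ ..., each finite intersection I-positive, and ⋂_{k∈ω} A_k ∈ I. -/
/-- The `I`-positive sets. -/
abbrev PosSet {κ : Type*} (I : Set (Set κ)) : Type _ := {A : Set κ // A ∉ I}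

/-- The space `X(I)` of sequences of positive sets with nonempty intersection
whose finite prefix intersections are positive. -/
def XI {κ : Type*} (I : Set (Set κ)) : Set (ℕ → PosSet I) :=
  {x | (⋂ n, (x n : Set κ)).Nonempty ∧ ∀ n : ℕ, (⋂ m < n, (x m : Set κ)) ∉ I}

/-- An `I`-partition of `S`: a maximal family of `I`-positive subsets of `S`
pairwise intersecting in `I`. -/
def IsIPartition {κ : Type*} (I : Set (Set κ)) (S : Set κ) (W : Set (Set κ)) : Prop :=
  (∀ A ∈ W, A ⊆ S ∧ A ∉ I) ∧ (W.Pairwise fun A B => A ∩ B ∈ I) ∧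
  ∀ B ⊆ S, B ∉ I → ∃ A ∈ W, A ∩ B ∉ I

/-- `W₁` refines `W₂`. -/
def Refines {κ : Type*} (W₁ W₂ : Set (Set κ)) : Prop := ∀ A ∈ W₁, ∃ B ∈ W₂, A ⊆ B

/-- `I` is a precipitous ideal on `κ`. -/
def IsPrecipitous {κ : Type u} (I : Set (Set κ)) : Prop :=
  (∀ a : κ, ({a} : Set κ) ∈ I) ∧
  (∀ A B : Set κ, A ∈ I → B ⊆ A → B ∈ I) ∧
  (∀ s : Set (Set κ), Cardinal.mk s < Cardinal.mk κ → s ⊆ I → ⋃₀ s ∈ I) ∧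
  (Set.univ : Set κ) ∉ I ∧
  ∀ S : Set κ, S ∉ I → ∀ W : ℕ → Set (Set κ),
    (∀ n, IsIPartition I S (W n)) → (∀ n, Refines (W (n + 1)) (W n)) →
    ∃ Y : ℕ → Set κ, (∀ n, Y n ∈ W n) ∧ (∀ n, Y (n + 1) ⊆ Y n) ∧ (⋂ n, Y n).Nonempty

/-- If a σ-complete ideal containing singletons is nowhere maximal and nowhere
ω₁-saturated, then there is a decreasing sequence of `I`-partitions of some
positive set `S` together with a decreasing chain of members whose finite
intersections are positive but whose total intersection lies in `I`. -/
theorem stmt_12 {κ : Type u} (I : Set (Set κ))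
    (hsing : ∀ a : κ, ({a} : Set κ) ∈ I)
    (hdown : ∀ A B : Set κ, A ∈ I → B ⊆ A → B ∈ I)
    (hsigma : ∀ f : ℕ → Set κ, (∀ n, f n ∈ I) → (⋃ n, f n) ∈ I)
    (hproper : (Set.univ : Set κ) ∉ I)
    (hnotmax : ∀ S : Set κ, S ∉ I → ∃ A ⊆ S, A ∉ I ∧ S \ A ∉ I)
    (hinfpart : ∀ S : Set κ, S ∉ I → ∃ W : Set (Set κ), IsIPartition I S W ∧ W.Infinite) :
    ∃ S : Set κ, S ∉ I ∧ ∃ W : ℕ → Set (Set κ), ∃ A : ℕ → Set κ,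
      (∀ n, IsIPartition I S (W n)) ∧ (∀ n, Refines (W (n + 1)) (W n)) ∧
      (∀ k, A k ∈ W k) ∧ (∀ k, A (k + 1) ⊆ A k) ∧
      (∀ n, (⋂ k ≤ n, A k) ∉ I) ∧ (⋂ k, A k) ∈ I := by
  classical
  obtain ⟨W0, hW0, hWinf⟩ := hinfpart Set.univ hproper
  have hemp : (∅ : Set κ) ∈ I := by
    by_cases h : Nonempty κ
    · obtain ⟨a⟩ := h
      exact hdown {a} ∅ (hsing a) (Set.empty_subset _)
    · exfalso
      haveI : IsEmpty κ := not_nonempty_iff.mp h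
      have hsub : W0 ⊆ {∅} := by
        intro T hT
        have : T = ∅ := Set.eq_empty_of_isEmpty T
        simp [this]
      exact hWinf ((Set.finite_singleton ∅).subset hsub)
  have hunion : ∀ X Y : Set κ, X ∈ I → Y ∈ I → X ∪ Y ∈ I := by
    intro X Y hX hY
    have h1 : (⋃ k : ℕ, if k = 0 then X else Y) ∈ I := by
      apply hsigma; intro k; split <;> assumption
    refine hdown _ _ h1 ?_
    rintro x (hx | hx)
    · exact Set.mem_iUnion.2 ⟨0, by simp [hx]⟩
    · exact Set.mem_iUnion.2 ⟨1, by simp [hx]⟩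
  have hfin : ∀ (g : ℕ → Set κ) (n : ℕ), (∀ k, k < n → g k ∈ I) →
      (⋃ k, ⋃ _ : k < n, g k) ∈ I := by
    intro g n hg
    have h1 : (⋃ k, if k < n then g k else ∅) ∈ I := by
      apply hsigma; intro k; split
      · exact hg k ‹_›
      · exact hemp
    refine hdown _ _ h1 ?_
    intro x hx
    simp only [Set.mem_iUnion] at hx ⊢
    obtain ⟨k, hk, hx⟩ := hx
    exact ⟨k, by simp [hk, hx]⟩
  set f := hWinf.natEmbedding with hf
  have hfmem : ∀ k, ((f k : Set κ)) ∈ W0 := fun k => (f k).2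
  have hfpos : ∀ k, ((f k : Set κ)) ∉ I := fun k => (hW0.1 _ (hfmem k)).2
  have hfdisj : ∀ j k : ℕ, j ≠ k → ((f j : Set κ)) ∩ (f k : Set κ) ∈ I := by
    intro j k hjk
    by_cases h : ((f j : Set κ)) = (f k : Set κ)
    · exact absurd (f.injective (Subtype.ext h)) hjk
    · exact hW0.2.1 (hfmem j) (hfmem k) h
  set D : Set κ := Set.univ \ ⋃ j, ((f j : Set κ)) with hD
  set B : ℕ → Set κ := fun k => if k = 0 then ((f 0 : Set κ)) ∪ D else (f k : Set κ) with hB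
  have hfsubB : ∀ k, ((f k : Set κ)) ⊆ B k := by
    intro k
    by_cases h : k = 0 <;> simp [hB, h]
  have hBpos : ∀ k, B k ∉ I := fun k hk => hfpos k (hdown _ _ hk (hfsubB k))
  have hBint : ∀ j k : ℕ, j ≠ k → B j ∩ B k ∈ I := by
    have key : ∀ j k : ℕ, j ≠ k → k ≠ 0 → B j ∩ B k ∈ I := by
      intro j k hjk hk0
      by_cases hj0 : j = 0
      · subst hj0
        refine hdown _ _ (hfdisj 0 k hjk) ?_
        intro x hx
        simp only [hB, hk0, if_neg, if_pos rfl, Set.mem_inter_iff, Set.mem_union] at hx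
        rcases hx with ⟨hx1 | hx1, hx2⟩
        · exact ⟨hx1, by simpa [hB, hk0] using hx2⟩
        · exact absurd (Set.mem_iUnion.2 ⟨k, by simpa [hB, hk0] using hx2⟩) hx1.2
      · refine hdown _ _ (hfdisj j k hjk) ?_
        simp [hB, hj0, hk0]
    intro j k hjk
    by_cases hk0 : k = 0
    · subst hk0
      have := key 0 j (Ne.symm hjk) hjk
      rwa [Set.inter_comm] at this
    · exact key j k hjk hk0
  have hBunion : (⋃ k, B k) = Set.univ := by
    apply Set.eq_univ_of_forall
    intro x
    by_cases hx : x ∈ ⋃ j, ((f j : Set κ))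
    · obtain ⟨j, hj⟩ := Set.mem_iUnion.1 hx
      exact Set.mem_iUnion.2 ⟨j, hfsubB j hj⟩
    · refine Set.mem_iUnion.2 ⟨0, ?_⟩
      have hx0 : x ∈ ((f 0 : Set κ)) ∪ D := Or.inr ⟨Set.mem_univ x, hx⟩
      simpa [hB] using hx0
  set C : ℕ → Set κ := fun k => B k \ ⋃ j, ⋃ _ : j < k, B j with hC
  have hCsubB : ∀ k, C k ⊆ B k := fun k => Set.diff_subset
  have hCdisj : ∀ j k : ℕ, j < k → C j ∩ C k = ∅ := by
    intro j k hjk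
    ext x
    simp only [Set.mem_inter_iff, Set.mem_empty_iff_false, iff_false, not_and]
    intro hxj hxk
    exact hxk.2 (Set.mem_iUnion.2 ⟨j, Set.mem_iUnion.2 ⟨hjk, hCsubB j hxj⟩⟩)
  have hCpos : ∀ k, C k ∉ I := by
    intro k hk
    apply hBpos k
    have hsub : B k ⊆ C k ∪ ⋃ j, ⋃ _ : j < k, (B j ∩ B k) := by
      intro x hx
      by_cases h : x ∈ ⋃ j, ⋃ _ : j < k, B j
      · obtain ⟨j, hj, hxj⟩ := by simpa only [Set.mem_iUnion] using h
        exact Or.inr (Set.mem_iUnion.2 ⟨j, Set.mem_iUnion.2 ⟨hj, hxj, hx⟩⟩)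
      · exact Or.inl ⟨hx, h⟩
    have h2 : (⋃ j, ⋃ _ : j < k, (B j ∩ B k)) ∈ I :=
      hfin _ k (fun j hj => hBint j k (Nat.ne_of_lt hj))
    exact hdown _ _ (hunion _ _ hk h2) hsub
  have hCunion : (⋃ k, C k) = Set.univ := by
    apply Set.eq_univ_of_forall
    intro x
    have hx : ∃ k, x ∈ B k := by
      have := hBunion ▸ Set.mem_univ x
      exact Set.mem_iUnion.1 (by rw [hBunion]; trivial)
    refine Set.mem_iUnion.2 ⟨Nat.find hx, Nat.find_spec hx, ?_⟩
    intro hmem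
    obtain ⟨j, hj, hxj⟩ := by simpa only [Set.mem_iUnion] using hmem
    exact Nat.find_min hx hj hxj
  set A : ℕ → Set κ := fun n => ⋃ k, ⋃ _ : n ≤ k, C k with hA
  have hAmem : ∀ (n : ℕ) (x : κ), x ∈ A n ↔ ∃ k, n ≤ k ∧ x ∈ C k := by
    intro n x
    rw [hA]
    simp only [Set.mem_iUnion, exists_prop]
  have hCA : ∀ n k, n ≤ k → C k ⊆ A n := fun n k hnk =>
    fun x hx => Set.mem_iUnion.2 ⟨k, Set.mem_iUnion.2 ⟨hnk, hx⟩⟩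
  have hApos : ∀ n, A n ∉ I := fun n hn => hCpos n (hdown _ _ hn (hCA n n le_rfl))
  have hAmono : ∀ m n : ℕ, m ≤ n → A n ⊆ A m := by
    intro m n hmn x hx
    obtain ⟨k, hk, hxk⟩ := (hAmem n x).1 hx
    exact (hAmem m x).2 ⟨k, hmn.trans hk, hxk⟩
  have hACdisj : ∀ n k : ℕ, k < n → A n ∩ C k = ∅ := by
    intro n k hkn
    ext x
    simp only [Set.mem_inter_iff, Set.mem_empty_iff_false, iff_false, not_and]
    intro hxA hxC
    obtain ⟨j, hj, hxj⟩ := (hAmem n x).1 hxA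
    have : x ∈ C k ∩ C j := ⟨hxC, hxj⟩
    rw [hCdisj k j (lt_of_lt_of_le hkn hj)] at this
    exact this
  set Wseq : ℕ → Set (Set κ) := fun n => insert (A n) (C '' Set.Iio n) with hWseq
  refine ⟨Set.univ, hproper, Wseq, A, ?_, ?_, ?_, ?_, ?_, ?_⟩
  · -- partitions
    intro n
    refine ⟨?_, ?_, ?_⟩
    · rintro T (rfl | ⟨k, _, rfl⟩)
      · exact ⟨Set.subset_univ _, hApos n⟩
      · exact ⟨Set.subset_univ _, hCpos k⟩
    · rintro T (rfl | ⟨j, hj, rfl⟩) U (rfl | ⟨k, hk, rfl⟩) hne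
      · exact absurd rfl hne
      · rw [hACdisj n k hk]; exact hemp
      · rw [Set.inter_comm, hACdisj n j hj]; exact hemp
      · have hjk : j ≠ k := fun h => hne (by rw [h])
        rcases hjk.lt_or_gt with h | h
        · rw [hCdisj j k h]; exact hemp
        · rw [Set.inter_comm, hCdisj k j h]; exact hemp
    · intro T _ hT
      by_contra hcon
      push_neg at hcon
      apply hT
      have hcov : T ⊆ ⋃ k, (C k ∩ T) := by
        intro x hx
        have : x ∈ ⋃ k, C k := by rw [hCunion]; trivial
        obtain ⟨k, hk⟩ := Set.mem_iUnion.1 this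
        exact Set.mem_iUnion.2 ⟨k, hk, hx⟩
      refine hdown _ _ (hsigma (fun k => C k ∩ T) ?_) hcov
      intro k
      by_cases hk : k < n
      · exact hcon (C k) (Or.inr ⟨k, hk, rfl⟩)
      · refine hdown _ _ (hcon (A n) (Or.inl rfl)) ?_
        exact Set.inter_subset_inter_left T (hCA n k (le_of_not_gt hk))
  · -- refines
    intro n T hT
    rcases hT with rfl | ⟨k, hk, rfl⟩
    · exact ⟨A n, Or.inl rfl, hAmono n (n + 1) (Nat.le_succ n)⟩
    · rcases Nat.lt_succ_iff_lt_or_eq.1 hk with h | rfl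
      · exact ⟨C k, Or.inr ⟨k, h, rfl⟩, subset_rfl⟩
      · exact ⟨A k, Or.inl rfl, hCA k k le_rfl⟩
  · exact fun k => Or.inl rfl
  · exact fun k => hAmono k (k + 1) (Nat.le_succ k)
  · intro n hn
    apply hApos n
    refine hdown _ _ hn ?_
    intro x hx
    simp only [Set.mem_iInter]
    intro k hk
    exact hAmono k n hk hx
  · have : (⋂ k, A k) = ∅ := by
      ext x
      simp only [Set.mem_iInter, Set.mem_empty_iff_false, iff_false]
      intro hx
      obtain ⟨k0, _, hxk0⟩ := (hAmem 0 x).1 (hx 0)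
      obtain ⟨k1, hk1, hxk1⟩ := (hAmem (k0 + 1) x).1 (hx (k0 + 1))
      have : x ∈ C k0 ∩ C k1 := ⟨hxk0, hxk1⟩
      rw [hCdisj k0 k1 hk1] at this
      exact this
    rw [this]; exact hemp
end

section
/- Let I be an ideal on κ and suppose S ∈ I⁺ is such that I restricted to S is not maximal and every I-positive subset of S splits into infinitely many pairwise almost disjoint I-positive pieces. Then there is a sequence (A_k)_{k∈ω} of subsets of S with A_0 ⊇ A_1 ⊇ ..., ⋂_{k≤n} A_k ∈ I⁺ for all n, and ⋂_{k∈ω} A_k ∈ I. -/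
/-- If `I` restricted to `S ∈ I⁺` is not maximal and every `I`-positive subset of
`S` splits into infinitely many pairwise almost disjoint `I`-positive pieces, then
there is a decreasing sequence of subsets of `S` whose finite intersections are
`I`-positive but whose total intersection is in `I`. -/
theorem stmt_19 {κ : Type u} (I : Set (Set κ))
    (hempty : (∅ : Set κ) ∈ I)
    (hdown : ∀ A B : Set κ, A ∈ I → B ⊆ A → B ∈ I)
    (hunion : ∀ A B : Set κ, A ∈ I → B ∈ I → A ∪ B ∈ I)
    (S : Set κ) (hS : S ∉ I)
    (hnotmax : ∃ A ⊆ S, A ∉ I ∧ S \ A ∉ I)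
    (hsplit : ∀ T ⊆ S, T ∉ I → ∃ W : ℕ → Set κ,
      (∀ n, W n ⊆ T ∧ W n ∉ I) ∧ Pairwise fun m n => W m ∩ W n ∈ I) :
    ∃ A : ℕ → Set κ, (∀ k, A k ⊆ S) ∧ (∀ k, A (k + 1) ⊆ A k) ∧
      (∀ n, (⋂ k ≤ n, A k) ∉ I) ∧ (⋂ k, A k) ∈ I := by
  obtain ⟨W, hW, hpair⟩ := hsplit S (subset_refl S) hS
  -- finite unions of sets in I are in I
  have hfin : ∀ (s : Finset ℕ) (f : ℕ → Set κ), (∀ m ∈ s, f m ∈ I) →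
      (⋃ m ∈ s, f m) ∈ I := by
    intro s
    induction s using Finset.induction with
    | empty => intro f _; simpa using hempty
    | @insert a s ha ih =>
      intro f h
      rw [Finset.set_biUnion_insert]
      exact hunion _ _ (h _ (Finset.mem_insert_self _ _))
        (ih f fun m hm => h m (Finset.mem_insert_of_mem hm))
  -- disjointify
  set W' : ℕ → Set κ := fun n => W n \ ⋃ m ∈ Finset.range n, W m with hW'def
  have hW'sub : ∀ n, W' n ⊆ W n := fun n => Set.diff_subset
  have hW'pos : ∀ n, W' n ∉ I := by
    intro n hn
    apply (hW n).2
    have hsmall : (⋃ m ∈ Finset.range n, W n ∩ W m) ∈ I := by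
      apply hfin
      intro m hm
      exact hpair (Nat.ne_of_gt (Finset.mem_range.mp hm))
    apply hdown _ _ (hunion _ _ hn hsmall)
    intro x hx
    by_cases hxu : x ∈ ⋃ m ∈ Finset.range n, W m
    · right
      simp only [Set.mem_iUnion] at hxu ⊢
      obtain ⟨m, hm, hxm⟩ := hxu
      exact ⟨m, hm, hx, hxm⟩
    · left; exact ⟨hx, hxu⟩
  refine ⟨fun k => ⋃ n, W' (k + n), ?_, ?_, ?_, ?_⟩
  · intro k
    exact Set.iUnion_subset fun n => (hW'sub _).trans (hW _).1
  · intro k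
    apply Set.iUnion_subset
    intro n
    have : k + 1 + n = k + (n + 1) := by omega
    rw [this]
    exact Set.subset_iUnion (fun n => W' (k + n)) (n + 1)
  · intro n hn
    apply hW'pos n
    apply hdown _ _ hn
    intro x hx
    simp only [Set.mem_iInter]
    intro k hk
    refine Set.mem_iUnion.mpr ⟨n - k, ?_⟩
    have : k + (n - k) = n := by omega
    rw [this]; exact hx
  · apply hdown _ _ hempty
    intro x hx
    simp only [Set.mem_iInter] at hx
    obtain ⟨n0, hn0⟩ := Set.mem_iUnion.mp (hx 0)
    simp only [Nat.zero_add] at hn0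
    obtain ⟨m, hm⟩ := Set.mem_iUnion.mp (hx (n0 + 1))
    exact hm.2 (Set.mem_iUnion.mpr ⟨n0, Set.mem_iUnion.mpr
      ⟨Finset.mem_range.mpr (by omega), hW'sub _ hn0⟩⟩)
end
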